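/- Let K be a field of characteristic ≠ 2, B ∈ GL_n(K) symmetric, and g ∈ GL_n(K) an isometry of B, i.e. g B gᵀ = B. If g² = −I, then det(B) is a square in K^×. -/
import Mathlib


open Matrix

/-- An invertible alternating (skew-symmetric) matrix over a field of
characteristic ≠ 2 has square determinant. -/
theorem skew_det_is_sq {K : Type*} [Field K] (h2 : (2 : K) ≠ 0) :
    ∀ n (C : Matrix (Fin n) (Fin n) K), Cᵀ = -C → IsUnit C.det →
      ∃ c : K, c ≠ 0 ∧ C.det = c ^ 2 := by
  intro n
  induction n using Nat.strong_induction_on with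
  | _ n ih =>
  intro C hskew hdet
  have hdiag : ∀ i, C i i = 0 := by
    intro i
    have h : C i i = - C i i := by
      have := congrFun (congrFun hskew i) i
      simpa using this
    have h' : C i i * 2 = 0 := by linear_combination h
    exact (mul_eq_zero.1 h').resolve_right h2
  match n, ih with
  | 0, ih => exact ⟨1, one_ne_zero, by simp [Matrix.det_fin_zero]⟩
  | 1, ih =>
      exfalso
      have : C.det = 0 := by
        rw [Matrix.det_fin_one, hdiag]
      rw [this] at hdet
      exact (not_isUnit_zero hdet : False)
  | (m+2), ih => ?_
  -- find a nonzero entry in row 0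
  have hrow : ∃ j, C 0 j ≠ 0 := by
    by_contra h
    push_neg at h
    have : C.det = 0 := Matrix.det_eq_zero_of_row_eq_zero 0 h
    rw [this] at hdet
    exact not_isUnit_zero hdet
  obtain ⟨j, hj⟩ := hrow
  have hj0 : j ≠ 0 := by rintro rfl; exact hj (hdiag 0)
  -- permutation putting j at position 1
  set e : Fin (m+2) ≃ Fin (m+2) := Equiv.swap 1 j with he
  have h01 : (0 : Fin (m+2)) ≠ 1 := by simp [Fin.ext_iff]
  have he0 : e 0 = 0 := Equiv.swap_apply_of_ne_of_ne h01 (Ne.symm hj0)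
  have he1 : e 1 = j := Equiv.swap_apply_left 1 j
  -- block reindexing
  set f : Fin 2 ⊕ Fin m ≃ Fin (m+2) :=
    finSumFinEquiv.trans (finCongr (add_comm 2 m)) with hf
  set D2 : Matrix (Fin 2 ⊕ Fin m) (Fin 2 ⊕ Fin m) K :=
    C.submatrix (e ∘ f) (e ∘ f) with hD2
  have hdetD2 : D2.det = C.det := by
    rw [hD2, ← Equiv.coe_trans, Matrix.det_submatrix_equiv_self]
  have hD2skew : D2ᵀ = -D2 := by
    rw [hD2]
    ext i k
    simp [Matrix.transpose_apply, Matrix.submatrix_apply]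
    have := congrFun (congrFun hskew (e (f i))) (e (f k))
    simpa [Matrix.transpose_apply] using this
  have hf0 : f (Sum.inl 0) = 0 := by
    simp [hf]
    rfl
  have hf1 : f (Sum.inl 1) = 1 := by
    simp [hf]
    rfl
  set A := D2.toBlocks₁₁ with hA
  set R := D2.toBlocks₁₂ with hR
  set L := D2.toBlocks₂₁ with hL
  set D := D2.toBlocks₂₂ with hD
  have hblocks : D2 = fromBlocks A R L D := (fromBlocks_toBlocks D2).symm
  have hentry : ∀ x y, D2 y x = - D2 x y := by
    intro x y
    have := congrFun (congrFun hD2skew x) y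
    simpa [Matrix.transpose_apply] using this
  have ha01 : A 0 1 = C 0 j := by
    show D2 (Sum.inl 0) (Sum.inl 1) = C 0 j
    rw [hD2]
    simp [Matrix.submatrix_apply, hf0, hf1, he0, he1]
  have ha00 : A 0 0 = 0 := by
    show D2 (Sum.inl 0) (Sum.inl 0) = 0
    rw [hD2]
    simp [Matrix.submatrix_apply, hf0, he0, hdiag]
  have ha11 : A 1 1 = 0 := by
    show D2 (Sum.inl 1) (Sum.inl 1) = 0
    rw [hD2]
    simp [Matrix.submatrix_apply, hf1, he1, hdiag]
  have ha10 : A 1 0 = - C 0 j := by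
    have h' : A 1 0 = -A 0 1 := hentry _ _
    rw [h', ha01]
  have hAdet : A.det = C 0 j ^ 2 := by
    rw [Matrix.det_fin_two, ha00, ha11, ha01, ha10]
    ring
  have hAunit : IsUnit A.det := by
    rw [hAdet]
    exact (isUnit_iff_ne_zero).2 (pow_ne_zero 2 hj)
  haveI : Invertible A := A.invertibleOfIsUnitDet hAunit
  have hinvOf : ⅟A = A⁻¹ := invOf_eq_nonsing_inv A
  set S := D - L * A⁻¹ * R with hS
  have hCdet : C.det = A.det * S.det := by
    rw [← hdetD2]
    conv_lhs => rw [hblocks]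
    rw [Matrix.det_fromBlocks₁₁, hinvOf]
  -- block transposes
  have hDt : Dᵀ = -D := by
    ext p q
    exact hentry _ _
  have hRt : Rᵀ = -L := by
    ext p q
    exact hentry _ _
  have hLt : Lᵀ = -R := by
    ext p q
    exact hentry _ _
  have hAinvT : A⁻¹ᵀ = -A⁻¹ := by
    have hAt : Aᵀ = -A := by
      ext p q
      exact hentry _ _
    rw [Matrix.transpose_nonsing_inv, hAt]
    refine Matrix.inv_eq_right_inv ?_
    rw [neg_mul_neg, Matrix.mul_nonsing_inv A hAunit]
  have hSskew : Sᵀ = -S := by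
    have key : (L * A⁻¹ * R)ᵀ = -(L * A⁻¹ * R) := by
      rw [Matrix.transpose_mul, Matrix.transpose_mul, hRt, hAinvT, hLt]
      simp [Matrix.neg_mul, Matrix.mul_neg, Matrix.mul_assoc]
    rw [hS, Matrix.transpose_sub, hDt, key]
    abel
  have hSunit : IsUnit S.det := by
    have h := hCdet ▸ hdet
    exact (IsUnit.mul_iff.1 h).2
  obtain ⟨c, hc, hcS⟩ := ih m (by omega) S hSskew hSunit
  refine ⟨C 0 j * c, mul_ne_zero hj hc, ?_⟩
  rw [hCdet, hAdet, hcS]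
  ring


/-- Let `K` be a field of characteristic ≠ 2, `B ∈ GL_n(K)` symmetric and
`g ∈ GL_n(K)` an isometry of `B` (i.e. `g B gᵀ = B`) with `g² = -1`.
Then `det B` is a square in `K^×`. -/
theorem det_is_square_of_isometry_sq_neg_one
    {K : Type*} [Field K] (h2 : (2 : K) ≠ 0) {n : ℕ}
    (B : Matrix (Fin n) (Fin n) K) (hBunit : IsUnit B.det) (hBsym : Bᵀ = B)
    (g : Matrix (Fin n) (Fin n) K) (hgunit : IsUnit g.det)
    (hiso : g * B * gᵀ = B) (hg2 : g * g = -1) :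
    ∃ c : K, c ≠ 0 ∧ B.det = c ^ 2 := by
  set C := g * B with hC
  have hBg : B * gᵀ = -(g * B) := by
    have h1 : g * (B * gᵀ) = B := by rw [← Matrix.mul_assoc]; exact hiso
    have h3 : (g * g) * (B * gᵀ) = g * B := by rw [Matrix.mul_assoc, h1]
    rw [hg2, Matrix.neg_mul, Matrix.one_mul] at h3
    exact neg_eq_iff_eq_neg.mp h3
  have hCskew : Cᵀ = -C := by
    rw [hC, Matrix.transpose_mul, hBsym, hBg]
  have hCunit : IsUnit C.det := by
    rw [hC, Matrix.det_mul]; exact hgunit.mul hBunit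
  obtain ⟨c, hc, hcsq⟩ := skew_det_is_sq h2 n C hCskew hCunit
  have hC0 : C.det ≠ 0 := hCunit.ne_zero
  have hdg0 : g.det ≠ 0 := hgunit.ne_zero
  -- `n` is even
  have hneg1 : ((-1 : K)) ^ n = 1 := by
    have h1 : C.det = (-1 : K) ^ n * C.det := by
      conv_lhs => rw [← Matrix.det_transpose C]
      rw [hCskew, Matrix.det_neg, Fintype.card_fin]
    have h4 : (-1 : K) ^ n * C.det = 1 * C.det := by rw [one_mul, ← h1]
    exact mul_right_cancel₀ hC0 h4
  have hn : Even n := by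
    rcases Nat.even_or_odd n with h | h
    · exact h
    · exfalso
      rw [h.neg_one_pow] at hneg1
      exact h2 (by linear_combination -hneg1)
  obtain ⟨m, hm⟩ := hn
  -- `det g` is a square
  have hgg : (1 - g) * (1 - g) = (-2 : K) • g := by
    calc (1 - g) * (1 - g) = 1 - g - g + g * g := by noncomm_ring
    _ = 1 - g - g + (-1) := by rw [hg2]
    _ = -(g + g) := by abel
    _ = (-2 : K) • g := by rw [neg_smul, two_smul]
  have hdetg : (1 - g).det ^ 2 = 2 ^ n * g.det := by
    have h5 := congrArg Matrix.det hgg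
    rw [Matrix.det_mul, Matrix.det_smul, Fintype.card_fin] at h5
    rw [pow_two, h5, (Even.neg_pow ⟨m, hm⟩ (2 : K))]
  have hd0 : (1 - g).det ≠ 0 := by
    intro h
    rw [h] at hdetg
    exact (mul_ne_zero (pow_ne_zero n h2) hdg0) (by rw [← hdetg]; ring)
  have hcsq' : c ^ 2 = g.det * B.det := by
    rw [← hcsq, hC, Matrix.det_mul]
  refine ⟨c * 2 ^ m / (1 - g).det, ?_, ?_⟩
  · exact div_ne_zero (mul_ne_zero hc (pow_ne_zero _ h2)) hd0
  · have h2n : (2 : K) ^ n = 2 ^ m * 2 ^ m := by rw [hm, pow_add]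
    rw [div_pow, hdetg, mul_pow, hcsq', h2n]
    field_simp
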